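/- arXiv:2601.02920 — 3 statements merged into one kernel-verified Lean document; each statement's English description precedes it below -/
import Mathlib

section
/- Let 𝓕 be a set system and t ≥ 2 an integer. If the graded Radon numbers satisfy rad_𝓕(t) > rad_𝓕(t−1), then t ≤ (2^{rad_𝓕(t−1) − 1} − 1) · h_𝓕(t); equivalently, rad_𝓕(t−1) ≥ 1 + log₂(1 + t / h_𝓕(t)). -/
/-- The `F`-convex hull of `P`: the intersection of all members of `F` containing `P`
(the whole ground set when no member of `F` contains `P`). -/
def convexHull' {X : Type*} (F : Set (Set X)) (P : Set X) : Set X :=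
  ⋂₀ {A | A ∈ F ∧ P ⊆ A}

/-- `P₁, P₂` form a Radon partition (with respect to `F`) of their union. -/
def IsRadonPartition {X : Type*} (F : Set (Set X)) (P₁ P₂ : Finset X) : Prop :=
  P₁.Nonempty ∧ P₂.Nonempty ∧ Disjoint P₁ P₂ ∧
    (convexHull' F ↑P₁ ∩ convexHull' F ↑P₂).Nonempty

/-- Every `r`-element subset of the ground set admits a Radon partition. -/
def HasRadonAt {X : Type*} (F : Set (Set X)) (r : ℕ) : Prop :=
  ∀ S : Finset X, S.card = r →
    ∃ P₁ P₂ : Finset X, (↑P₁ ∪ ↑P₂ : Set X) = ↑S ∧ IsRadonPartition F P₁ P₂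

/-- The Radon number of a set system, `∞` if no `r` works. -/
noncomputable def radonNumber {X : Type*} (F : Set (Set X)) : ℕ∞ :=
  sInf {r : ℕ∞ | ∃ n : ℕ, r = n ∧ HasRadonAt F n}

/-- The graded Radon number: supremum of Radon numbers of subfamilies of size at most `t`. -/
noncomputable def gradedRadon {X : Type*} (F : Set (Set X)) (t : ℕ) : ℕ∞ :=
  ⨆ G ∈ {G : Finset (Set X) | ↑G ⊆ F ∧ G.card ≤ t}, radonNumber (↑G : Set (Set X))

/-- `F` has the Helly property at `h`: every finite nonempty subfamily of `F` in which
every at most `h` members (nonempty subfamily of size ≤ `h`) have a common point has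
nonempty intersection. -/
def HasHellyAt {X : Type*} (F : Set (Set X)) (h : ℕ) : Prop :=
  ∀ G : Finset (Set X), ↑G ⊆ F → G.Nonempty →
    (∀ G' ⊆ G, G'.Nonempty → G'.card ≤ h → (⋂₀ (↑G' : Set (Set X))).Nonempty) →
    (⋂₀ (↑G : Set (Set X))).Nonempty

/-- The Helly number of a set system, `∞` if no `h` works. -/
noncomputable def hellyNumber {X : Type*} (F : Set (Set X)) : ℕ∞ :=
  sInf {r : ℕ∞ | ∃ n : ℕ, r = n ∧ HasHellyAt F n}

/-- The graded Helly number: supremum of Helly numbers of subfamilies of size at most `t`. -/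
noncomputable def gradedHelly {X : Type*} (F : Set (Set X)) (t : ℕ) : ℕ∞ :=
  ⨆ G ∈ {G : Finset (Set X) | ↑G ⊆ F ∧ G.card ≤ t}, hellyNumber (↑G : Set (Set X))

/-!
Pick `G ⊆ F` with `|G| ≤ t` and Radon number `> r`, and an `r`-set `S` with no Radon partition
for `G`. Then `|G| = t`, and deleting any member of `G` gives a family of size `t - 1`, for which
`S` does have a Radon partition. For each of the `2 ^ (r - 1) - 1` bipartitions `(P, S \ P)` of
`S`, the two `G`-hulls are disjoint: the members of `G` containing `P` or `S \ P` have empty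
intersection, and by the Helly property some `h` of them already do. Every `A ∈ G` is among these
witnesses, for otherwise the Radon point of `S` for `G \ {A}` would lie in all witnesses of its
bipartition. Hence `t ≤ (2 ^ (r - 1) - 1) * h`.
-/

open Finset

section

variable {X : Type*}

lemma convexHull'_inter_convexHull' (F : Set (Set X)) (P₁ P₂ : Set X) :
    convexHull' F P₁ ∩ convexHull' F P₂ = ⋂₀ {A | A ∈ F ∧ (P₁ ⊆ A ∨ P₂ ⊆ A)} := by
  rw [convexHull', convexHull', ← Set.sInter_union]
  exact congrArg _ (Set.ext fun _ => and_or_left.symm)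

lemma convexHull'_mono (F : Set (Set X)) {P P' : Set X} (hP : P ⊆ P') :
    convexHull' F P ⊆ convexHull' F P' :=
  Set.sInter_subset_sInter fun _ hA => ⟨hA.1, hP.trans hA.2⟩

section Radon

variable {F : Set (Set X)}

def HasRadonPartition (F : Set (Set X)) (S : Finset X) : Prop :=
  ∃ P₁ P₂ : Finset X, (↑P₁ ∪ ↑P₂ : Set X) = ↑S ∧ IsRadonPartition F P₁ P₂

lemma IsRadonPartition.symm {P₁ P₂ : Finset X} (h : IsRadonPartition F P₁ P₂) :
    IsRadonPartition F P₂ P₁ :=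
  ⟨h.2.1, h.1, h.2.2.1.symm, Set.inter_comm _ _ ▸ h.2.2.2⟩

lemma HasRadonPartition.mono {S S' : Finset X} (h : HasRadonPartition F S) (hS : S ⊆ S') :
    HasRadonPartition F S' := by
  classical
  obtain ⟨P₁, P₂, hu, hP₁, hP₂, hdisj, hx⟩ := h
  rw [← coe_union, coe_inj] at hu
  refine ⟨P₁ ∪ (S' \ S), P₂, ?_, hP₁.mono subset_union_left, hP₂, ?_, ?_⟩
  · rw [← coe_union, union_right_comm, hu, union_sdiff_of_subset hS]
  · exact disjoint_union_left.2 ⟨hdisj, sdiff_disjoint.mono_right (hu ▸ subset_union_right)⟩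
  · exact hx.mono (Set.inter_subset_inter_left _ (convexHull'_mono _ (by simp)))

lemma HasRadonPartition.exists_mem_left [DecidableEq X] {S : Finset X} {s : X}
    (h : HasRadonPartition F S) (hs : s ∈ S) :
    ∃ P ⊆ S, s ∈ P ∧ IsRadonPartition F P (S \ P) := by
  obtain ⟨P₁, P₂, hu, hR⟩ := h
  rw [← coe_union, coe_inj] at hu
  subst hu
  rcases mem_union.1 hs with hs | hs
  · exact ⟨P₁, subset_union_left, hs, by rwa [union_sdiff_cancel_left hR.2.2.1]⟩
  · exact ⟨P₂, subset_union_right, hs, by rw [union_sdiff_cancel_right hR.2.2.1]; exact hR.symm⟩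

lemma convexHull'_inter_convexHull'_sdiff_eq_empty [DecidableEq X] {S P : Finset X}
    (hS : ¬ HasRadonPartition F S) (hP : P ⊂ S) (hne : P.Nonempty) :
    convexHull' F ↑P ∩ convexHull' F ↑(S \ P) = ∅ := by
  refine Set.not_nonempty_iff_eq_empty.1 fun hx =>
    hS ⟨P, S \ P, ?_, hne, sdiff_nonempty.2 hP.2, disjoint_sdiff, hx⟩
  rw [← coe_union, union_sdiff_of_subset hP.1]

lemma hasRadonAt_mono (F : Set (Set X)) : Monotone (HasRadonAt F) := by
  intro n m hnm hn S hS
  obtain ⟨S', hS'S, hS'⟩ := exists_subset_card_eq (hS ▸ hnm)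
  exact HasRadonPartition.mono (hn S' hS') hS'S

end Radon

lemma Monotone.of_sInf_le {P : ℕ → Prop} (hP : Monotone P) {m : ℕ}
    (hm : sInf {r : ℕ∞ | ∃ n : ℕ, r = n ∧ P n} ≤ m) : P m := by
  have hne : {r : ℕ∞ | ∃ n : ℕ, r = n ∧ P n}.Nonempty := by
    by_contra hempty
    rw [Set.not_nonempty_iff_eq_empty.1 hempty, sInf_empty] at hm
    exact ENat.natCast_ne_top m (top_le_iff.1 hm)
  obtain ⟨n, hn, hPn⟩ := csInf_mem hne
  exact hP (by exact_mod_cast hn ▸ hm) hPn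

lemma radonNumber_le_of_hasRadonAt {F : Set (Set X)} {r : ℕ} (h : HasRadonAt F r) :
    radonNumber F ≤ r :=
  sInf_le ⟨r, rfl, h⟩

lemma hasRadonAt_of_radonNumber_le {F : Set (Set X)} {r : ℕ} (h : radonNumber F ≤ r) :
    HasRadonAt F r :=
  (hasRadonAt_mono F).of_sInf_le h

lemma hasHellyAt_mono (F : Set (Set X)) : Monotone (HasHellyAt F) :=
  fun _ _ hnm hn G hGF hG hsmall =>
    hn G hGF hG fun G' hG' hne hcard => hsmall G' hG' hne (hcard.trans hnm)

lemma hasHellyAt_of_hellyNumber_le {F : Set (Set X)} {h : ℕ} (hF : hellyNumber F ≤ h) :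
    HasHellyAt F h :=
  (hasHellyAt_mono F).of_sInf_le hF

lemma radonNumber_le_gradedRadon {F : Set (Set X)} {G : Finset (Set X)} {t : ℕ}
    (hGF : ↑G ⊆ F) (hG : G.card ≤ t) : radonNumber (↑G : Set (Set X)) ≤ gradedRadon F t :=
  le_biSup (fun G : Finset (Set X) => radonNumber (↑G : Set (Set X))) ⟨hGF, hG⟩

lemma hellyNumber_le_gradedHelly {F : Set (Set X)} {G : Finset (Set X)} {t : ℕ}
    (hGF : ↑G ⊆ F) (hG : G.card ≤ t) : hellyNumber (↑G : Set (Set X)) ≤ gradedHelly F t :=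
  le_biSup (fun G : Finset (Set X) => hellyNumber (↑G : Set (Set X))) ⟨hGF, hG⟩

lemma HasHellyAt.exists_card_le_sInter_eq_empty {F : Set (Set X)} {h : ℕ} (hF : HasHellyAt F h)
    {G : Finset (Set X)} (hGF : ↑G ⊆ F) (hG : ⋂₀ (↑G : Set (Set X)) = ∅) :
    ∃ W ⊆ G, W.card ≤ h ∧ ⋂₀ (↑W : Set (Set X)) = ∅ := by
  rcases G.eq_empty_or_nonempty with rfl | hne
  · exact ⟨∅, Subset.rfl, by simp, hG⟩
  by_contra! hsmall
  exact Set.nonempty_iff_ne_empty.1 (hF G hGF hne fun W hW _ hW' => hsmall W hW hW') hG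

lemma HasHellyAt.exists_separating {G : Finset (Set X)} {h : ℕ}
    (hG : HasHellyAt (↑G : Set (Set X)) h) {P₁ P₂ : Set X} (hP : convexHull' (↑G : Set (Set X)) P₁ ∩ convexHull' ↑G P₂ = ∅) :
    ∃ W ⊆ G, W.card ≤ h ∧ ⋂₀ (↑W : Set (Set X)) = ∅ ∧ ∀ B ∈ W, P₁ ⊆ B ∨ P₂ ⊆ B := by
  classical
  obtain ⟨W, hWG, hWh, hW⟩ := hG.exists_card_le_sInter_eq_empty
    (G := G.filter fun B => P₁ ⊆ B ∨ P₂ ⊆ B) (coe_subset.2 (filter_subset _ _))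
    (by rw [coe_filter]; exact (convexHull'_inter_convexHull' _ _ _).symm.trans hP)
  exact ⟨W, hWG.trans (filter_subset _ _), hWh, hW, fun B hB => (mem_filter.1 (hWG hB)).2⟩

lemma card_filter_mem_ssubsets_le {α : Type*} [DecidableEq α] {S : Finset α} {s : α}
    (hs : s ∈ S) : (S.ssubsets.filter (s ∈ ·)).card ≤ 2 ^ (S.card - 1) - 1 := by
  calc _ ≤ (S.erase s).ssubsets.card := by
        refine card_le_card_of_injOn (·.erase s) (fun P hP => ?_)
          fun P hP Q hQ => erase_injOn' s (mem_filter.1 hP).2 (mem_filter.1 hQ).2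
        obtain ⟨⟨hPS, hSP⟩, hsP⟩ := (mem_filter.1 hP).imp_left mem_ssubsets.1
        refine mem_ssubsets.2 ⟨erase_subset_erase s hPS, fun hSP' => hSP ?_⟩
        rw [← insert_erase hs, ← insert_erase hsP]
        exact insert_subset_insert s hSP'
    _ = 2 ^ (S.card - 1) - 1 := by
        rw [ssubsets, card_erase_of_mem (mem_powerset_self _), card_powerset,
          card_erase_of_mem hs]

theorem card_le_of_forall_hasRadonPartition_erase [DecidableEq (Set X)] {G : Finset (Set X)}
    {S : Finset X} {h : ℕ} (hHelly : HasHellyAt (↑G : Set (Set X)) h)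
    (hS : ¬ HasRadonPartition ↑G S)
    (hcrit : ∀ A ∈ G, HasRadonPartition ↑(G.erase A) S) :
    G.card ≤ (2 ^ (S.card - 1) - 1) * h := by
  classical
  rcases G.eq_empty_or_nonempty with rfl | ⟨A, hA⟩
  · simp
  obtain ⟨s, hs⟩ : S.Nonempty := by
    obtain ⟨P₁, P₂, hu, ⟨x, hx⟩, -⟩ := hcrit A hA
    exact ⟨x, mem_coe.1 (hu.subset (Or.inl hx))⟩
  -- a bipartition `(P, S \ P)` of `S` is recorded by its part `P` containing `s`
  set I := S.ssubsets.filter (s ∈ ·)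
  have hW : ∀ P ∈ I, ∃ W ⊆ G, W.card ≤ h ∧ ⋂₀ (↑W : Set (Set X)) = ∅ ∧
      ∀ B ∈ W, ↑P ⊆ B ∨ ↑(S \ P) ⊆ B := fun P hP =>
    hHelly.exists_separating <| convexHull'_inter_convexHull'_sdiff_eq_empty hS
      (mem_ssubsets.1 (mem_filter.1 hP).1) ⟨s, (mem_filter.1 hP).2⟩
  choose! W hWG hWh hWempty hWsep using hW
  have hcover : G ⊆ I.biUnion W := by
    intro A hA
    by_contra hAW
    obtain ⟨P, hPS, hsP, hR⟩ := (hcrit A hA).exists_mem_left hs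
    have hPI : P ∈ I := mem_filter.2 ⟨mem_ssubsets.2 ⟨hPS, sdiff_nonempty.1 hR.2.1⟩, hsP⟩
    obtain ⟨x, hx⟩ := hR.2.2.2
    rw [convexHull'_inter_convexHull'] at hx
    have hWA : (↑(W P) : Set (Set X)) ⊆
        {B | B ∈ (↑(G.erase A) : Set (Set X)) ∧ (↑P ⊆ B ∨ ↑(S \ P) ⊆ B)} := fun B hB =>
      ⟨mem_erase.2 ⟨fun hBA => hAW (mem_biUnion.2 ⟨P, hPI, hBA ▸ hB⟩), hWG P hPI hB⟩,
        hWsep P hPI B hB⟩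
    have hxW := Set.sInter_subset_sInter hWA hx
    rw [hWempty P hPI] at hxW
    exact hxW
  calc G.card ≤ (I.biUnion W).card := card_le_card hcover
    _ ≤ ∑ P ∈ I, (W P).card := card_biUnion_le
    _ ≤ I.card * h := sum_le_card_nsmul _ _ _ hWh
    _ ≤ (2 ^ (S.card - 1) - 1) * h := Nat.mul_le_mul_right _ (card_filter_mem_ssubsets_le hs)

end

theorem le_of_gradedRadon_lt_general {X : Type*} (F : Set (Set X)) (t : ℕ)
    (hlt : gradedRadon F (t - 1) < gradedRadon F t)
    (r h : ℕ) (hr : gradedRadon F (t - 1) = (r : ℕ∞)) (hh : gradedHelly F t = (h : ℕ∞)) :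
    t ≤ (2 ^ (r - 1) - 1) * h := by
  classical
  obtain ⟨G, ⟨hGF, hGt⟩, hGr⟩ := lt_biSup_iff.1 (hr ▸ hlt)
  have hcard : G.card = t := by
    by_contra hne
    exact (hr ▸ radonNumber_le_gradedRadon hGF (by omega : G.card ≤ t - 1)).not_gt hGr
  obtain ⟨S, hSr, hS⟩ : ∃ S : Finset X, S.card = r ∧ ¬ HasRadonPartition ↑G S := by
    by_contra! hall
    exact (radonNumber_le_of_hasRadonAt hall).not_gt hGr
  have hcrit : ∀ A ∈ G, HasRadonPartition ↑(G.erase A) S := fun A hA =>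
    hasRadonAt_of_radonNumber_le (hr ▸ radonNumber_le_gradedRadon
      ((coe_subset.2 (erase_subset A G)).trans hGF) (by rw [card_erase_of_mem hA, hcard])) S hSr
  have hHelly : HasHellyAt (↑G : Set (Set X)) h :=
    hasHellyAt_of_hellyNumber_le (hh ▸ hellyNumber_le_gradedHelly hGF hGt)
  calc t = G.card := hcard.symm
    _ ≤ (2 ^ (r - 1) - 1) * h := hSr ▸ card_le_of_forall_hasRadonPartition_erase hHelly hS hcrit

/-- If the graded Radon number strictly increases at `t` (for `t ≥ 2`), then
`t ≤ (2 ^ (rad_F(t-1) - 1) - 1) * h_F(t)`, equivalently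
`rad_F(t-1) ≥ 1 + log₂(1 + t / h_F(t))`. Here `r = rad_F(t-1)` and `h = h_F(t)`
(these graded values are finite). -/
theorem le_of_gradedRadon_lt {X : Type*} (F : Set (Set X)) (t : ℕ) (ht : 2 ≤ t)
    (hlt : gradedRadon F (t - 1) < gradedRadon F t)
    (r h : ℕ) (hr : gradedRadon F (t - 1) = (r : ℕ∞)) (hh : gradedHelly F t = (h : ℕ∞)) :
    t ≤ (2 ^ (r - 1) - 1) * h :=
  le_of_gradedRadon_lt_general F t hlt r h hr hh
end

section
/- For every set system 𝓕 (with nonempty ground set) whose Radon number rad_𝓕 is finite, the Helly number satisfies h_𝓕 ≤ rad_𝓕 − 1 (Levi's inequality for set systems). -/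
lemma convexHull'_subset {X : Type*} {F : Set (Set X)} {P A : Set X}
    (hA : A ∈ F) (hPA : P ⊆ A) : convexHull' F P ⊆ A :=
  fun _ hx => hx A ⟨hA, hPA⟩

lemma two_le_of_hasRadonAt {X : Type*} [Nonempty X] {F : Set (Set X)} {r : ℕ}
    (hr : HasRadonAt F r) : 2 ≤ r := by
  by_contra h
  push_neg at h
  interval_cases r
  · obtain ⟨P₁, P₂, hu, h1, -, -, -⟩ := hr ∅ rfl
    obtain ⟨x, hx⟩ := h1
    have : x ∈ (↑(∅ : Finset X) : Set X) := hu ▸ Set.mem_union_left _ hx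
    simpa using this
  · obtain ⟨x⟩ := ‹Nonempty X›
    obtain ⟨P₁, P₂, hu, h1, h2, hd, -⟩ := hr {x} (Finset.card_singleton x)
    obtain ⟨a, ha⟩ := h1
    obtain ⟨b, hb⟩ := h2
    have ha' : a ∈ ({x} : Finset X) := by
      have : (a : X) ∈ (↑({x} : Finset X) : Set X) := hu ▸ Set.mem_union_left _ ha
      simpa using this
    have hb' : b ∈ ({x} : Finset X) := by
      have : (b : X) ∈ (↑({x} : Finset X) : Set X) := hu ▸ Set.mem_union_right _ hb
      simpa using this
    simp only [Finset.mem_singleton] at ha' hb'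
    subst ha'
    subst hb'
    exact Finset.disjoint_left.mp hd ha hb

lemma hasHellyAt_of_hasRadonAt {X : Type*} [Nonempty X] {F : Set (Set X)} {r : ℕ}
    (hr : HasRadonAt F r) : HasHellyAt F (r - 1) := by
  classical
  have hr2 : 2 ≤ r := two_le_of_hasRadonAt hr
  intro G
  induction G using Finset.strongInduction with
  | _ G IH =>
    intro hGF hGne hH
    by_cases hc : G.card ≤ r - 1
    · exact hH G (Finset.Subset.refl G) hGne hc
    push_neg at hc
    have hcard : r ≤ G.card := by omega
    have hex : ∀ A : Set X, ∃ x : X, A ∈ G → x ∈ ⋂₀ (↑(G.erase A) : Set (Set X)) := by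
      intro A
      by_cases hA : A ∈ G
      · have hlt : G.erase A ⊂ G := Finset.erase_ssubset hA
        have hne : (G.erase A).Nonempty := by
          rw [← Finset.card_pos, Finset.card_erase_of_mem hA]; omega
        obtain ⟨x, hx⟩ := IH _ hlt (fun B hB => hGF (Finset.erase_subset _ _ hB)) hne
          (fun G' hG' => hH G' (hG'.trans (Finset.erase_subset _ _)))
        exact ⟨x, fun _ => hx⟩
      · exact ⟨Classical.arbitrary X, fun h => absurd h hA⟩
    choose f hf using hex
    have key : ∀ A ∈ G, ∀ B ∈ G, B ≠ A → f B ∈ A := by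
      intro A hA B hB hBA
      exact hf B hB A (by simp [Finset.mem_erase, hA, Ne.symm hBA])
    by_cases hinj : ∃ A ∈ G, ∃ B ∈ G, A ≠ B ∧ f A = f B
    · obtain ⟨A, hA, B, hB, hAB, hfab⟩ := hinj
      refine ⟨f A, ?_⟩
      intro C hC
      rw [Finset.mem_coe] at hC
      by_cases hCA : C = A
      · rw [hCA, hfab]
        exact key A hA B hB (Ne.symm hAB)
      · exact key C hC A hA (fun h => hCA h.symm)
    · push_neg at hinj
      have hinjOn : Set.InjOn f ↑G := by
        intro A hA B hB h
        by_contra hne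
        exact hinj A (Finset.mem_coe.mp hA) B (Finset.mem_coe.mp hB) hne h
      have hcardim : (G.image f).card = G.card := Finset.card_image_of_injOn hinjOn
      have hle : r ≤ (G.image f).card := by rw [hcardim]; exact hcard
      obtain ⟨S, hSsub, hScard⟩ := Finset.exists_subset_card_eq hle
      obtain ⟨P₁, P₂, hunion, h1, h2, hdisj, p, hp⟩ := hr S hScard
      refine ⟨p, ?_⟩
      intro A hA
      rw [Finset.mem_coe] at hA
      have keyS : ∀ x ∈ S, x ≠ f A → x ∈ A := by
        intro x hx hxfA
        obtain ⟨B, hB, hfB⟩ := Finset.mem_image.mp (hSsub hx)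
        have hBA : B ≠ A := fun h => hxfA (h ▸ hfB.symm)
        exact hfB ▸ key A hA B hB hBA
      by_cases hfA : f A ∈ P₁
      · have hsub : (↑P₂ : Set X) ⊆ A := by
          intro x hx
          have hxS : x ∈ S := Finset.mem_coe.mp (hunion ▸ Set.mem_union_right _ hx)
          exact keyS x hxS (fun h => Finset.disjoint_left.mp hdisj hfA (h ▸ hx))
        exact convexHull'_subset (hGF hA) hsub hp.2
      · have hsub : (↑P₁ : Set X) ⊆ A := by
          intro x hx
          have hxS : x ∈ S := Finset.mem_coe.mp (hunion ▸ Set.mem_union_left _ hx)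
          exact keyS x hxS (fun h => hfA (h ▸ hx))
        exact convexHull'_subset (hGF hA) hsub hp.1

/-- Levi's inequality for set systems: if the ground set is nonempty and the Radon number
of `F` is finite, then `h_F ≤ rad_F - 1`. -/
theorem hellyNumber_le_radonNumber_sub_one {X : Type*} [Nonempty X]
    (F : Set (Set X)) (hfin : radonNumber F ≠ ⊤) :
    hellyNumber F ≤ radonNumber F - 1 := by
  have hs : {r : ℕ∞ | ∃ n : ℕ, r = n ∧ HasRadonAt F n}.Nonempty := by
    by_contra h
    rw [Set.not_nonempty_iff_eq_empty] at h
    simp [radonNumber, h] at hfin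
  obtain ⟨_, n, rfl, hn⟩ := hs
  have hTne : {m : ℕ | HasRadonAt F m}.Nonempty := ⟨n, hn⟩
  set k := sInf {m : ℕ | HasRadonAt F m} with hk
  have hmem : HasRadonAt F k := Nat.sInf_mem hTne
  have hk2 : 2 ≤ k := two_le_of_hasRadonAt hmem
  have h1 : hellyNumber F ≤ ((k - 1 : ℕ) : ℕ∞) :=
    sInf_le ⟨k - 1, rfl, hasHellyAt_of_hasRadonAt hmem⟩
  have h2 : ((k : ℕ) : ℕ∞) ≤ radonNumber F := by
    apply le_sInf
    rintro _ ⟨m, rfl, hm⟩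
    exact_mod_cast Nat.sInf_le hm
  calc hellyNumber F ≤ ((k - 1 : ℕ) : ℕ∞) := h1
    _ = (k : ℕ∞) - 1 := by
        rw [ENat.coe_sub]; rfl
    _ ≤ radonNumber F - 1 := tsub_le_tsub_right h2 1
end

section
/- Let 𝓕 be a set system with ground set X and let W ⊆ 𝓕 be a finite nonempty subfamily such that the intersection of all members of W is empty while every proper nonempty subfamily of W has nonempty intersection. Then the Radon number of 𝓕 satisfies rad_𝓕 ≥ |W| + 1; more precisely, choosing for each A ∈ W a point x_A lying in every member of W except A, the set S = {x_A : A ∈ W} has exactly |W| elements and admits no partition into two nonempty parts S = P₁ ⊔ P₂ with conv_𝓕(P₁) ∩ conv_𝓕(P₂) ≠ ∅. -/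
/-- Key lemma: if `P₁, P₂` are disjoint nonempty finsets contained in `x '' W`,
their hulls are disjoint. -/
lemma key_no_radon {X : Type*} (F : Set (Set X)) (W : Finset (Set X)) (hWF : ↑W ⊆ F)
    (hWempty : ⋂₀ (↑W : Set (Set X)) = ∅) (x : Set X → X)
    (hx : ∀ A ∈ W, ∀ B ∈ W, B ≠ A → x A ∈ B) (hinj : Set.InjOn x (↑W : Set (Set X)))
    (P₁ P₂ : Finset X) (hd : Disjoint P₁ P₂)
    (hsub : (↑P₁ ∪ ↑P₂ : Set X) ⊆ x '' (↑W : Set (Set X))) :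
    ¬(convexHull' F ↑P₁ ∩ convexHull' F ↑P₂).Nonempty := by
  rintro ⟨p, hp1, hp2⟩
  have hmem : ∀ B ∈ W, p ∈ B := by
    intro B hB
    have sub_of : ∀ (P : Finset X), (↑P : Set X) ⊆ x '' (↑W : Set (Set X)) →
        x B ∉ P → (↑P : Set X) ⊆ B := by
      intro P hP hxB q hq
      obtain ⟨A, hA, rfl⟩ := hP hq
      have hAB : B ≠ A := by
        rintro rfl
        exact hxB hq
      exact hx A hA B hB hAB
    by_cases h1 : x B ∈ P₁
    · have h2 : x B ∉ P₂ := fun h2 => (Finset.disjoint_left.mp hd h1) h2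
      exact hp2 B ⟨hWF hB, sub_of P₂ (fun q hq => hsub (Or.inr hq)) h2⟩
    · exact hp1 B ⟨hWF hB, sub_of P₁ (fun q hq => hsub (Or.inl hq)) h1⟩
  have : p ∈ ⋂₀ (↑W : Set (Set X)) := fun B hB => hmem B hB
  rw [hWempty] at this
  exact this

/-- If `W ⊆ F` is a finite nonempty subfamily with empty intersection all of whose proper
nonempty subfamilies have nonempty intersection, and `x` picks for each `A ∈ W` a point
lying in every member of `W` except `A`, then `S = {x_A : A ∈ W}` has exactly `|W|`
elements, `S` admits no Radon partition with respect to `F`, and `rad_F ≥ |W| + 1`. -/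
theorem radonNumber_ge_of_minimal_nonintersecting {X : Type*} (F : Set (Set X))
    (W : Finset (Set X)) (hWF : ↑W ⊆ F) (hWne : W.Nonempty)
    (hWempty : ⋂₀ (↑W : Set (Set X)) = ∅)
    (hWmin : ∀ W' ⊆ W, W' ≠ W → W'.Nonempty → (⋂₀ (↑W' : Set (Set X))).Nonempty)
    (x : Set X → X) (hx : ∀ A ∈ W, ∀ B ∈ W, B ≠ A → x A ∈ B) :
    (x '' (↑W : Set (Set X))).ncard = W.card ∧
    (∀ P₁ P₂ : Finset X, P₁.Nonempty → P₂.Nonempty → Disjoint P₁ P₂ →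
        (↑P₁ ∪ ↑P₂ : Set X) = x '' (↑W : Set (Set X)) →
        ¬(convexHull' F ↑P₁ ∩ convexHull' F ↑P₂).Nonempty) ∧
    (W.card : ℕ∞) + 1 ≤ radonNumber F := by
  classical
  have hnotself : ∀ A ∈ W, x A ∉ A := by
    intro A hA hxA
    have : x A ∈ ⋂₀ (↑W : Set (Set X)) := by
      intro B hB
      by_cases h : B = A
      · exact h ▸ hxA
      · exact hx A hA B hB h
    rw [hWempty] at this
    exact this
  have hinj : Set.InjOn x (↑W : Set (Set X)) := by
    intro A hA B hB hAB
    by_contra h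
    exact hnotself A hA (hAB ▸ hx B hB A hA h)
  refine ⟨?_, ?_, ?_⟩
  · rw [Set.ncard_image_of_injOn hinj, Set.ncard_coe_finset]
  · intro P₁ P₂ h1 h2 hd heq
    exact key_no_radon F W hWF hWempty x hx hinj P₁ P₂ hd (heq ▸ subset_rfl)
  · apply le_sInf
    rintro r ⟨n, rfl, hR⟩
    have hn : W.card + 1 ≤ n := by
      by_contra h
      push_neg at h
      have hn' : n ≤ W.card := Nat.lt_succ_iff.mp h
      have hcard : (W.image x).card = W.card := Finset.card_image_of_injOn hinj
      obtain ⟨S, hS, hScard⟩ := Finset.exists_subset_card_eq (hcard ▸ hn' : n ≤ (W.image x).card)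
      obtain ⟨P₁, P₂, hunion, hne1, hne2, hdis, hhull⟩ := hR S hScard
      refine key_no_radon F W hWF hWempty x hx hinj P₁ P₂ hdis ?_ hhull
      rw [hunion]
      calc (↑S : Set X) ⊆ ↑(W.image x) := Finset.coe_subset.mpr hS
        _ = x '' (↑W : Set (Set X)) := Finset.coe_image
    exact_mod_cast hn
end
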